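/- arXiv:2209.07040 — 3 statements merged into one kernel-verified Lean document; each statement's English description precedes it below -/
import Mathlib

section
/- Under assumptions A1–A2 with x₀ ∈ ℝ and a ∈ (−1,1), the closed-loop states (X_t)_{t∈ℕ₀} under the AICMSS control strategy satisfy, for all λ ∈ (a²,1) and all t ∈ ℕ₀: 𝔼[X_t²] ≤ x₀² + β(λ)/(1 − λ), where S₁ := 𝔼[|W_t|], S₂ := 𝔼[|W_t|²], D₁ := |b|U_max + S₁, D₂ := b²U_max² + 2|b|U_max·S₁ + S₂, E(λ) := (|a|D₁ + √(a²D₁² + (λ − a²)D₂)) / (λ − a²), and β(λ) := a²E(λ)² + 2|a|E(λ)D₁ + D₂. -/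
open MeasureTheory ProbabilityTheory Real
open scoped ENNReal NNReal RealInnerProductSpace Matrix

noncomputable section

/-- The saturation function `σ_r`. -/
def sat (r x : ℝ) : ℝ := if |x| ≤ r then x else r * x / |x|

/-- The Moore–Penrose pseudoinverse of a real matrix, characterized (uniquely) by the four
Penrose equations. -/
def pinv {m n : ℕ} (A : Matrix (Fin m) (Fin n) ℝ) : Matrix (Fin n) (Fin m) ℝ :=
  letI := Classical.propDecidable
  if h : ∃ B : Matrix (Fin n) (Fin m) ℝ,
      A * B * A = A ∧ B * A * B = B ∧ (A * B)ᵀ = A * B ∧ (B * A)ᵀ = B * A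
  then h.choose else 0

/-- `ℝ²` with the Euclidean norm. -/
abbrev E2 := EuclideanSpace ℝ (Fin 2)

/-- The uniform probability distribution on `[-C, C]`. -/
def uniformLaw (C : ℝ) : Measure ℝ :=
  (ENNReal.ofReal (2 * C))⁻¹ • (volume.restrict (Set.Icc (-C) C))

/-- The closed-loop system under the AICMSS control strategy, together with the standing
assumptions A1–A2 of the paper. -/
structure AICMSS (Ω : Type*) [MeasurableSpace Ω] (P : Measure Ω) where
  a : ℝ
  b : ℝ
  σW : ℝ
  Umax : ℝ
  C : ℝ
  x0 : ℝ
  aInit : ℝ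
  bInit : ℝ
  W : ℕ → Ω → ℝ
  V : ℕ → Ω → ℝ
  X : ℕ → Ω → ℝ
  U : ℕ → Ω → ℝ
  θhat : ℕ → Ω → E2
  G : ℕ → Ω → ℝ
  hσW : 0 < σW
  ha : |a| ≤ 1
  hb : b ≠ 0
  hCpos : 0 < C
  hCU : C < Umax
  hbInit : bInit ≠ 0
  measW : ∀ t, Measurable (W t)
  measV : ∀ t, Measurable (V t)
  measX : ∀ t, Measurable (X t)
  measU : ∀ t, Measurable (U t)
  measθ : ∀ t, Measurable (θhat t)
  hWlaw : ∀ t, P.map (W t) = gaussianReal 0 ⟨σW ^ 2, sq_nonneg σW⟩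
  hVlaw : ∀ t, P.map (V t) = uniformLaw C
  hIndep : iIndepFun (Sum.elim W V) P
  hX0 : ∀ ω, X 0 ω = x0
  hGinit : ∀ t ω, t ≤ 1 → G t ω = -(aInit / bInit)
  hG : ∀ t ω, 2 ≤ t →
    G t ω = -(WithLp.equiv 2 (Fin 2 → ℝ) (θhat (t - 1) ω) 0 /
              WithLp.equiv 2 (Fin 2 → ℝ) (θhat (t - 1) ω) 1)
  hU : ∀ t ω, U t ω = sat (Umax - C) (G t ω * X t ω) + V t ω
  hXrec : ∀ t ω, X (t + 1) ω = a * X t ω + b * U t ω + W t ω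
  hθ : ∀ t ω, 1 ≤ t →
    θhat t ω = (WithLp.equiv 2 (Fin 2 → ℝ)).symm
      ((pinv ((Matrix.of fun (s : Fin t) (j : Fin 2) =>
            if j = 0 then X (s.1 + 1) ω else U (s.1 + 1) ω)ᵀ *
          (Matrix.of fun (s : Fin t) (j : Fin 2) =>
            if j = 0 then X (s.1 + 1) ω else U (s.1 + 1) ω)) *
        (Matrix.of fun (s : Fin t) (j : Fin 2) =>
            if j = 0 then X (s.1 + 1) ω else U (s.1 + 1) ω)ᵀ).mulVec
        fun s : Fin t => X (s.1 + 2) ω)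

namespace AICMSS

variable {Ω : Type*} [MeasurableSpace Ω] {P : Measure Ω}

/-- The state-input data `Z_t = (X_t, U_t)`. -/
def Z (S : AICMSS Ω P) (t : ℕ) (ω : Ω) : E2 :=
  (WithLp.equiv 2 (Fin 2 → ℝ)).symm ![S.X t ω, S.U t ω]

/-- The true parameter `θ* = (a, b)`. -/
def θstar (S : AICMSS Ω P) : E2 := (WithLp.equiv 2 (Fin 2 → ℝ)).symm ![S.a, S.b]

/-- `D = U_max - C`. -/
def D (S : AICMSS Ω P) : ℝ := S.Umax - S.C

/-- The empirical covariance matrix `∑_{t=1}^i Z_t Z_tᵀ`. -/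
def covMat (S : AICMSS Ω P) (i : ℕ) (ω : Ω) : Matrix (Fin 2) (Fin 2) ℝ :=
  ∑ t ∈ Finset.Icc 1 i,
    Matrix.vecMulVec (WithLp.equiv 2 (Fin 2 → ℝ) (S.Z t ω))
      (WithLp.equiv 2 (Fin 2 → ℝ) (S.Z t ω))

end AICMSS

/-- Conditional expectation of `g` given the σ-algebra `m` (notation-free wrapper). -/
def cexp {Ω : Type*} {m0 : MeasurableSpace Ω} (P : Measure Ω) (m : MeasurableSpace Ω)
    (g : Ω → ℝ) : Ω → ℝ := P[g|m]

/-- Conditional probability of the event `s` given the σ-algebra `m`. -/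
def cprob {Ω : Type*} {m0 : MeasurableSpace Ω} (P : Measure Ω) (m : MeasurableSpace Ω)
    (s : Set Ω) : Ω → ℝ := cexp P m (s.indicator fun _ => (1 : ℝ))

/-- The quadratic form `ζᵀ Γ ζ`. -/
def quadForm (Γ : Matrix (Fin 2) (Fin 2) ℝ) (ζ : E2) : ℝ :=
  dotProduct (WithLp.equiv 2 (Fin 2 → ℝ) ζ)
    (Γ.mulVec (WithLp.equiv 2 (Fin 2 → ℝ) ζ))

/-- The `(k, Γ, p)`-block martingale small-ball condition. -/
def BMSB {Ω : Type*} [m0 : MeasurableSpace Ω] (P : Measure Ω)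
    (Z : ℕ → Ω → E2) (k : ℕ) (Γ : Matrix (Fin 2) (Fin 2) ℝ) (p : ℝ) : Prop :=
  ∀ F : Filtration ℕ m0,
    (∀ ζ : E2, Adapted F fun t ω => (⟪ζ, Z t ω⟫ : ℝ)) →
    ∀ ζ : E2, ‖ζ‖ = 1 → ∀ j : ℕ,
      ∀ᵐ ω ∂P, p ≤ (k : ℝ)⁻¹ * ∑ i ∈ Finset.Icc 1 k,
        cprob P (F j) {ω' | Real.sqrt (quadForm Γ ζ) ≤ |⟪ζ, Z (j + i) ω'⟫|} ω

/-- Minimum eigenvalue of a (Hermitian) real matrix. -/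
def minEig (A : Matrix (Fin 2) (Fin 2) ℝ) : ℝ :=
  if h : A.IsHermitian then ⨅ i, h.eigenvalues i else 0

/-- Maximum eigenvalue of a (Hermitian) real matrix. -/
def maxEig (A : Matrix (Fin 2) (Fin 2) ℝ) : ℝ :=
  if h : A.IsHermitian then ⨆ i, h.eigenvalues i else 0

/-! Saturation and `|V_t| ≤ C` give `|U_t| ≤ U_max` almost surely, so `|X_t|` is dominated by
`R_0 = |x₀|`, `R_{t+1} = |a| R_t + |b| U_max + |W_t|`, a process that no longer sees the adaptive
gains. `R_t` is a function of `W_0, …, W_{t-1}`, hence independent of `W_t`, and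
`m_t = 𝔼[R_t²]` satisfies `m_{t+1} = a² m_t + 2|a| D₁ 𝔼[R_t] + D₂`. Since `𝔼[R_t] ≤ √m_t` and
`E(λ)` is the positive root of `(λ - a²) E² = 2|a| D₁ E + D₂`, this gives
`m_{t+1} ≤ λ m_t + β(λ)`, and iterating yields `m_t ≤ x₀² + β(λ) / (1 - λ)`. -/

lemma abs_sat_le {r : ℝ} (hr : 0 ≤ r) (x : ℝ) : |sat r x| ≤ r := by
  unfold sat
  split_ifs with h
  · exact h
  · have hx : 0 < |x| := hr.trans_lt (not_le.1 h)
    rw [abs_div, abs_mul, abs_abs, abs_of_nonneg hr, mul_div_assoc, div_self hx.ne', mul_one]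

lemma quadratic_root_spec {a D1 D2 c E : ℝ} (hD2 : 0 ≤ D2) (hc : 0 < c)
    (hE : E = (|a| * D1 + √(a ^ 2 * D1 ^ 2 + c * D2)) / c) :
    c * E ^ 2 = 2 * |a| * D1 * E + D2 ∧ 2 * |a| * D1 ≤ c * E := by
  have hsq : √(a ^ 2 * D1 ^ 2 + c * D2) ^ 2 = a ^ 2 * D1 ^ 2 + c * D2 :=
    Real.sq_sqrt (by positivity)
  have hge : |a| * D1 ≤ √(a ^ 2 * D1 ^ 2 + c * D2) :=
    Real.le_sqrt_of_sq_le (by nlinarith [sq_abs a, mul_nonneg hc.le hD2])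
  have hcE : c * E = |a| * D1 + √(a ^ 2 * D1 ^ 2 + c * D2) := by
    rw [hE]; field_simp
  have hp : (|a| * D1) ^ 2 = a ^ 2 * D1 ^ 2 := by rw [mul_pow, sq_abs]
  refine ⟨mul_left_cancel₀ hc.ne' ?_, by linarith⟩
  linear_combination (c * E - |a| * D1 + √(a ^ 2 * D1 ^ 2 + c * D2)) * hcE + hsq - hp

lemma mul_add_le_of_root {c q d E m μ : ℝ} (hc : 0 ≤ c) (hq : 0 ≤ q)
    (hroot : c * E ^ 2 = q * E + d) (hqE : q ≤ c * E) (hμ : 0 ≤ μ) (hμm : μ ^ 2 ≤ m) :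
    q * μ + d ≤ c * m + c * E ^ 2 := by
  -- for `μ ≥ E`, `c μ² - q μ - d = (μ - E) (c (μ + E) - q) ≥ 0`
  rcases le_total μ E with hle | hge
  · nlinarith [mul_le_mul_of_nonneg_left hle hq, mul_nonneg hc (hμm.trans' (sq_nonneg μ))]
  · nlinarith [mul_nonneg (sub_nonneg.2 hge) (mul_nonneg hc hμ), mul_le_mul_of_nonneg_left hμm hc,
      mul_nonneg hc (sq_nonneg E)]

lemma le_add_div_one_sub_of_le_mul_add {lam β : ℝ} {m : ℕ → ℝ} (hlam : 0 ≤ lam)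
    (hlam1 : lam < 1) (hβ : 0 ≤ β) (hm0 : 0 ≤ m 0) (hm : ∀ t, m (t + 1) ≤ lam * m t + β)
    (t : ℕ) : m t ≤ m 0 + β / (1 - lam) := by
  have hfix : lam * (β / (1 - lam)) + β = β / (1 - lam) := by
    field_simp [(sub_pos.2 hlam1).ne']
    ring
  induction t with
  | zero => linarith [div_nonneg hβ (sub_pos.2 hlam1).le]
  | succ t ih =>
    nlinarith [hm t, mul_le_mul_of_nonneg_left ih hlam, mul_le_of_le_one_left hm0 hlam1.le]

namespace ProbabilityTheory

variable {Ω : Type*} {mΩ : MeasurableSpace Ω} {μ : Measure Ω}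

lemma sq_integral_le_integral_sq [IsProbabilityMeasure μ] {Y : Ω → ℝ} (hY : MemLp Y 2 μ) :
    (∫ ω, Y ω ∂μ) ^ 2 ≤ ∫ ω, Y ω ^ 2 ∂μ := by
  have h := variance_eq_sub hY
  simp only [Pi.pow_apply] at h
  linarith [variance_nonneg Y μ]

lemma IndepFun.integral_add_sq {Y Z : Ω → ℝ} (hYZ : IndepFun Y Z μ) (hY : MemLp Y 2 μ)
    (hZ : MemLp Z 2 μ) :
    ∫ ω, (Y ω + Z ω) ^ 2 ∂μ =
      ∫ ω, Y ω ^ 2 ∂μ + 2 * ((∫ ω, Y ω ∂μ) * ∫ ω, Z ω ∂μ) + ∫ ω, Z ω ^ 2 ∂μ := by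
  have hYZint : Integrable (fun ω => 2 * (Y ω * Z ω)) μ := (hY.integrable_mul hZ).const_mul 2
  have hsum : Integrable (fun ω => Y ω ^ 2 + 2 * (Y ω * Z ω)) μ := hY.integrable_sq.add hYZint
  calc ∫ ω, (Y ω + Z ω) ^ 2 ∂μ = ∫ ω, (Y ω ^ 2 + 2 * (Y ω * Z ω) + Z ω ^ 2) ∂μ := by
        congr 1; funext ω; ring
    _ = _ := by
      rw [integral_add hsum hZ.integrable_sq,
        integral_add hY.integrable_sq hYZint, integral_const_mul,
        hYZ.integral_fun_mul_eq_mul_integral hY.aestronglyMeasurable hZ.aestronglyMeasurable]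

lemma iIndepFun.indepFun_of_measurable_iSup_lt {ι β γ : Type*} [Preorder ι]
    [mβ : MeasurableSpace β] [mγ : MeasurableSpace γ] {W : ι → Ω → β}
    (hmeas : ∀ i, Measurable (W i)) (hW : iIndepFun W μ) {i : ι} {Y : Ω → γ}
    (hY : Measurable[⨆ k ∈ Set.Iio i, mβ.comap (W k)] Y) : IndepFun Y (W i) μ := by
  have h := indep_iSup_of_disjoint (S := Set.Iio i) (T := {i}) (fun k => (hmeas k).comap_le)
    hW.iIndep (Set.disjoint_singleton_right.2 (lt_irrefl i))
  rw [iSup_singleton] at h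
  rw [IndepFun_iff_Indep]
  exact indep_of_indep_of_le_left h hY.comap_le

end ProbabilityTheory

namespace AICMSS

variable {Ω : Type*} [MeasurableSpace Ω] {P : Measure Ω} (S : AICMSS Ω P)

def D1 : ℝ := |S.b| * S.Umax + ∫ ω, |S.W 0 ω| ∂P

def D2 : ℝ :=
  S.b ^ 2 * S.Umax ^ 2 + 2 * |S.b| * S.Umax * (∫ ω, |S.W 0 ω| ∂P) + ∫ ω, |S.W 0 ω| ^ 2 ∂P

def domState : ℕ → Ω → ℝ
  | 0 => fun _ => |S.x0|
  | n + 1 => fun ω => |S.a| * domState n ω + |S.b| * S.Umax + |S.W n ω|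

lemma Umax_pos : 0 < S.Umax := S.hCpos.trans S.hCU

lemma domState_nonneg (n : ℕ) (ω : Ω) : 0 ≤ S.domState n ω := by
  induction n with
  | zero => exact abs_nonneg _
  | succ n ih =>
    have := S.Umax_pos
    simp only [domState]
    positivity

lemma ae_abs_V_le : ∀ᵐ ω ∂P, ∀ t, |S.V t ω| ≤ S.C := by
  refine ae_all_iff.2 fun t => ?_
  have hIcc : MeasurableSet (Set.Icc (-S.C) S.C)ᶜ := measurableSet_Icc.compl
  have hnull : P.map (S.V t) (Set.Icc (-S.C) S.C)ᶜ = 0 := by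
    simp [S.hVlaw t, uniformLaw, Measure.restrict_apply hIcc]
  rw [Measure.map_apply (S.measV t) hIcc] at hnull
  filter_upwards [measure_eq_zero_iff_ae_notMem.1 hnull] with ω hω
  simpa [abs_le] using hω

lemma ae_abs_U_le : ∀ᵐ ω ∂P, ∀ t, |S.U t ω| ≤ S.Umax := by
  filter_upwards [S.ae_abs_V_le] with ω hV t
  rw [S.hU]
  calc |sat (S.Umax - S.C) (S.G t ω * S.X t ω) + S.V t ω|
      ≤ |sat (S.Umax - S.C) (S.G t ω * S.X t ω)| + |S.V t ω| := abs_add_le _ _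
    _ ≤ (S.Umax - S.C) + S.C := add_le_add (abs_sat_le (by linarith [S.hCU]) _) (hV t)
    _ = S.Umax := by ring

lemma ae_abs_X_le_domState : ∀ᵐ ω ∂P, ∀ t, |S.X t ω| ≤ S.domState t ω := by
  filter_upwards [S.ae_abs_U_le] with ω hU t
  induction t with
  | zero => simp [domState, S.hX0]
  | succ t ih =>
    rw [S.hXrec]
    calc |S.a * S.X t ω + S.b * S.U t ω + S.W t ω|
        ≤ |S.a| * |S.X t ω| + |S.b| * |S.U t ω| + |S.W t ω| := by
          simpa only [abs_mul] using abs_add_three (S.a * S.X t ω) (S.b * S.U t ω) (S.W t ω)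
      _ ≤ |S.a| * S.domState t ω + |S.b| * S.Umax + |S.W t ω| := by
          gcongr
          exact hU t
      _ = S.domState (t + 1) ω := rfl

lemma measurable_domState_past (n : ℕ) :
    Measurable[⨆ k ∈ Set.Iio n, MeasurableSpace.comap (S.W k) inferInstance]
      (S.domState n) := by
  induction n with
  | zero => exact measurable_const
  | succ n ih =>
    have hmono := ih.mono (biSup_mono fun k (hk : k < n) => hk.trans n.lt_succ_self) le_rfl
    have hW := (comap_measurable (S.W n)).mono
      (le_iSup₂ (f := fun k (_ : k ∈ Set.Iio (n + 1)) =>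
        MeasurableSpace.comap (S.W k) inferInstance) n n.lt_succ_self) le_rfl
    exact ((hmono.const_mul _).add_const _).add (measurable_abs.comp hW)

lemma iIndepFun_W : iIndepFun S.W P :=
  iIndepFun.precomp (g := Sum.inl) Sum.inl_injective S.hIndep

lemma indepFun_domState_W (n : ℕ) : IndepFun (S.domState n) (S.W n) P :=
  iIndepFun.indepFun_of_measurable_iSup_lt S.measW S.iIndepFun_W (S.measurable_domState_past n)

lemma identDistrib_W (n : ℕ) : IdentDistrib (S.W n) (S.W 0) P P :=
  ⟨(S.measW n).aemeasurable, (S.measW 0).aemeasurable, by rw [S.hWlaw, S.hWlaw]⟩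

lemma memLp_W (n : ℕ) : MemLp (S.W n) 2 P := by
  have h : MemLp id 2 (P.map (S.W n)) := by
    rw [S.hWlaw]
    exact memLp_id_gaussianReal' 2 (by simp)
  exact (memLp_map_measure_iff aestronglyMeasurable_id (S.measW n).aemeasurable).1 h

lemma integral_comp_W {u : ℝ → ℝ} (hu : Measurable u) (n : ℕ) :
    ∫ ω, u (S.W n ω) ∂P = ∫ ω, u (S.W 0 ω) ∂P :=
  ((S.identDistrib_W n).comp hu).integral_eq

variable [IsProbabilityMeasure P]

lemma integrable_abs_W (n : ℕ) : Integrable (fun ω => |S.W n ω|) P :=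
  MemLp.integrable one_le_two (S.memLp_W n).abs

lemma memLp_domState (n : ℕ) : MemLp (S.domState n) 2 P := by
  induction n with
  | zero => exact memLp_const _
  | succ n ih => exact ((ih.const_mul _).add (memLp_const _)).add (S.memLp_W n).abs

lemma integral_const_add_abs_W (n : ℕ) : ∫ ω, (|S.b| * S.Umax + |S.W n ω|) ∂P = S.D1 := by
  rw [S.integral_comp_W (u := fun x => |S.b| * S.Umax + |x|) (by fun_prop),
    integral_add (integrable_const _) (S.integrable_abs_W 0)]
  simp [D1]

lemma integral_const_add_abs_W_sq (n : ℕ) : ∫ ω, (|S.b| * S.Umax + |S.W n ω|) ^ 2 ∂P = S.D2 := by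
  have hW1 : Integrable (fun ω => 2 * |S.b| * S.Umax * |S.W 0 ω|) P :=
    (S.integrable_abs_W 0).const_mul _
  have hW01 : Integrable (fun ω => S.b ^ 2 * S.Umax ^ 2 + 2 * |S.b| * S.Umax * |S.W 0 ω|) P :=
    (integrable_const _).add hW1
  have hW2 : Integrable (fun ω => |S.W 0 ω| ^ 2) P := (S.memLp_W 0).abs.integrable_sq
  calc ∫ ω, (|S.b| * S.Umax + |S.W n ω|) ^ 2 ∂P
      = ∫ ω, (|S.b| * S.Umax + |S.W 0 ω|) ^ 2 ∂P :=
        S.integral_comp_W (u := fun x => (|S.b| * S.Umax + |x|) ^ 2) (by fun_prop) n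
    _ = ∫ ω, ((S.b ^ 2 * S.Umax ^ 2 + 2 * |S.b| * S.Umax * |S.W 0 ω|) + |S.W 0 ω| ^ 2) ∂P := by
        congr 1; funext ω; rw [add_sq, mul_pow, sq_abs]; ring
    _ = S.D2 := by
        rw [integral_add hW01 hW2, integral_add (integrable_const _) hW1,
          integral_const_mul (2 * |S.b| * S.Umax)]
        simp [D2]

lemma integral_domState_succ_sq (n : ℕ) :
    ∫ ω, S.domState (n + 1) ω ^ 2 ∂P =
      S.a ^ 2 * ∫ ω, S.domState n ω ^ 2 ∂P + 2 * |S.a| * S.D1 * ∫ ω, S.domState n ω ∂P +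
        S.D2 := by
  have hind : IndepFun (fun ω => |S.a| * S.domState n ω)
      (fun ω => |S.b| * S.Umax + |S.W n ω|) P :=
    (S.indepFun_domState_W n).comp (measurable_const.mul measurable_id)
      (measurable_const.add measurable_abs)
  have hY : MemLp (fun ω => |S.a| * S.domState n ω) 2 P := (S.memLp_domState n).const_mul _
  have hZ : MemLp (fun ω => |S.b| * S.Umax + |S.W n ω|) 2 P :=
    (memLp_const (|S.b| * S.Umax)).add (S.memLp_W n).abs
  calc ∫ ω, S.domState (n + 1) ω ^ 2 ∂P
      = ∫ ω, (|S.a| * S.domState n ω + (|S.b| * S.Umax + |S.W n ω|)) ^ 2 ∂P := by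
        simp only [domState, add_assoc]
    _ = _ := by
        rw [hind.integral_add_sq hY hZ, S.integral_const_add_abs_W, S.integral_const_add_abs_W_sq]
        simp only [mul_pow, sq_abs, integral_const_mul]
        ring

lemma integral_domState_sq_le {lam E : ℝ} (hlam : S.a ^ 2 < lam) (hlam1 : lam < 1)
    (hE : E = (|S.a| * S.D1 + √(S.a ^ 2 * S.D1 ^ 2 + (lam - S.a ^ 2) * S.D2)) /
      (lam - S.a ^ 2)) (t : ℕ) :
    ∫ ω, S.domState t ω ^ 2 ∂P ≤
      S.x0 ^ 2 + (S.a ^ 2 * E ^ 2 + 2 * |S.a| * E * S.D1 + S.D2) / (1 - lam) := by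
  have := S.Umax_pos
  have hD1 : 0 ≤ S.D1 := S.integral_const_add_abs_W 0 ▸ integral_nonneg fun ω => by positivity
  have hD2 : 0 ≤ S.D2 := S.integral_const_add_abs_W_sq 0 ▸ integral_nonneg fun ω => by positivity
  have hc : 0 < lam - S.a ^ 2 := sub_pos.2 hlam
  obtain ⟨hroot, hqE⟩ := quadratic_root_spec hD2 hc hE
  have hstep (n : ℕ) : ∫ ω, S.domState (n + 1) ω ^ 2 ∂P ≤
      lam * ∫ ω, S.domState n ω ^ 2 ∂P + (S.a ^ 2 * E ^ 2 + 2 * |S.a| * E * S.D1 + S.D2) := by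
    have hdrift := mul_add_le_of_root hc.le (by positivity) hroot hqE
      (integral_nonneg (S.domState_nonneg n)) (sq_integral_le_integral_sq (S.memLp_domState n))
    rw [S.integral_domState_succ_sq]
    nlinarith [sq_nonneg (S.a * E)]
  have hβ : 0 ≤ S.a ^ 2 * E ^ 2 + 2 * |S.a| * E * S.D1 + S.D2 := by
    nlinarith [sq_nonneg (S.a * E), mul_nonneg hc.le (sq_nonneg E)]
  have hm0 : ∫ ω, S.domState 0 ω ^ 2 ∂P = S.x0 ^ 2 := by simp [domState]
  simpa only [hm0] using
    le_add_div_one_sub_of_le_mul_add (m := fun n => ∫ ω, S.domState n ω ^ 2 ∂P)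
      ((sq_nonneg _).trans hlam.le) hlam1 hβ (hm0 ▸ sq_nonneg S.x0) hstep t

lemma lintegral_X_sq_le (t : ℕ) :
    ∫⁻ ω, ENNReal.ofReal (S.X t ω ^ 2) ∂P ≤ ENNReal.ofReal (∫ ω, S.domState t ω ^ 2 ∂P) := by
  rw [ofReal_integral_eq_lintegral_ofReal (S.memLp_domState t).integrable_sq
    (.of_forall fun ω => sq_nonneg _)]
  refine lintegral_mono_ae ?_
  filter_upwards [S.ae_abs_X_le_domState] with ω hω
  exact ENNReal.ofReal_le_ofReal (sq_le_sq' (abs_le.1 (hω t)).1 (abs_le.1 (hω t)).2)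

end AICMSS

theorem stability_a_lt_one_general {Ω : Type*} [MeasurableSpace Ω] (P : Measure Ω)
    [IsProbabilityMeasure P] (S : AICMSS Ω P) :
    ∀ lam : ℝ, S.a ^ 2 < lam → lam < 1 → ∀ t : ℕ,
      let S1 : ℝ := ∫ ω, |S.W 0 ω| ∂P
      let S2 : ℝ := ∫ ω, |S.W 0 ω| ^ 2 ∂P
      let D1 : ℝ := |S.b| * S.Umax + S1
      let D2 : ℝ := S.b ^ 2 * S.Umax ^ 2 + 2 * |S.b| * S.Umax * S1 + S2
      let Elam : ℝ := (|S.a| * D1 + Real.sqrt (S.a ^ 2 * D1 ^ 2 + (lam - S.a ^ 2) * D2)) /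
        (lam - S.a ^ 2)
      let β : ℝ := S.a ^ 2 * Elam ^ 2 + 2 * |S.a| * Elam * D1 + D2
      ∫⁻ ω, ENNReal.ofReal (S.X t ω ^ 2) ∂P ≤ ENNReal.ofReal (S.x0 ^ 2 + β / (1 - lam)) := by
  intro lam hlam hlam1 t _ _ _ _ _ _
  exact (S.lintegral_X_sq_le t).trans
    (ENNReal.ofReal_le_ofReal (S.integral_domState_sq_le hlam hlam1 rfl t))

/-- **Lemma 7: geometric mean-square stability when `a ∈ (-1,1)`.** -/
theorem stability_a_lt_one {Ω : Type*} [MeasurableSpace Ω] (P : Measure Ω)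
    [IsProbabilityMeasure P] (S : AICMSS Ω P) (ha' : S.a ∈ Set.Ioo (-1 : ℝ) 1) :
    ∀ lam : ℝ, S.a ^ 2 < lam → lam < 1 → ∀ t : ℕ,
      let S1 : ℝ := ∫ ω, |S.W 0 ω| ∂P
      let S2 : ℝ := ∫ ω, |S.W 0 ω| ^ 2 ∂P
      let D1 : ℝ := |S.b| * S.Umax + S1
      let D2 : ℝ := S.b ^ 2 * S.Umax ^ 2 + 2 * |S.b| * S.Umax * S1 + S2
      let Elam : ℝ := (|S.a| * D1 + Real.sqrt (S.a ^ 2 * D1 ^ 2 + (lam - S.a ^ 2) * D2)) /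
        (lam - S.a ^ 2)
      let β : ℝ := S.a ^ 2 * Elam ^ 2 + 2 * |S.a| * Elam * D1 + D2
      ∫⁻ ω, ENNReal.ofReal (S.X t ω ^ 2) ∂P ≤ ENNReal.ofReal (S.x0 ^ 2 + β / (1 - lam)) :=
  stability_a_lt_one_general P S
end
end

section
/- Under assumptions A1–A2 with x₀ ∈ ℝ and a ∈ {−1,1}, the states (X*_t)_{t∈ℕ₀} of the reference system X*_{t+1} = aX*_t + b(σ_D(−(a/b)X*_t) + V_t) + W_t, X*_0 = x₀, are mean square bounded: there exists e > 0 such that 𝔼[(X*_t)²] ≤ e for all t ∈ ℕ₀. -/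
open MeasureTheory ProbabilityTheory Real
open scoped ENNReal NNReal RealInnerProductSpace Matrix

noncomputable section

/-!
Write the recursion as `X (t + 1) = F (X t) + N t` with `F x = a x + b σ_D (-(a / b) x)` and
`N t = b V t + W t`. Since `|a| ≤ 1`, the saturated feedback pulls the state towards the origin by
at least `δ = D |b|`: `|F x| ≤ max (|x| - δ) 0`. The noise `N t` is sub-Gaussian (Hoeffding's lemma
for `V t`, the Gaussian mgf for `W t`) and independent of `X t`, because `X t` only depends on the
noise before time `t`. Hence for small `l > 0` the Lyapunov function `cosh (l x)` has a geometric
drift, `E cosh (l X (t + 1)) ≤ ρ E cosh (l X t) + k` with `ρ < 1`, so `E cosh (l X t)` stays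
bounded, and `x ^ 2 ≤ 2 cosh (l x) / l ^ 2` bounds the second moments.
-/

lemma abs_sub_sat {r : ℝ} (hr : 0 ≤ r) (y : ℝ) : |y - sat r y| = max (|y| - r) 0 := by
  unfold sat
  split_ifs with hy
  · simp [hy]
  · have hy0 : 0 < |y| := hr.trans_lt (not_le.mp hy)
    have hfac : y - r * y / |y| = (1 - r / |y|) * y := by ring
    rw [hfac, abs_mul, abs_of_pos (by rw [sub_pos, div_lt_one hy0]; exact not_le.mp hy),
      max_eq_left (by linarith [not_le.mp hy])]
    field_simp

lemma abs_mul_add_mul_sat_le {a b r : ℝ} (ha : |a| ≤ 1) (hb : b ≠ 0) (hr : 0 ≤ r) (x : ℝ) :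
    |a * x + b * sat r (-(a / b) * x)| ≤ max (|x| - r * |b|) 0 := by
  set y := -(a / b) * x with hy
  have hxy : a * x + b * sat r y = -b * (y - sat r y) := by rw [hy]; field_simp; ring
  have hby : |b| * |y| ≤ |x| := by
    calc |b| * |y| = |a| * |x| := by
          rw [hy, abs_mul, abs_neg, abs_div]; field_simp
      _ ≤ |x| := mul_le_of_le_one_left (abs_nonneg x) ha
  rw [hxy, abs_mul, abs_neg, abs_sub_sat hr, mul_max_of_nonneg _ _ (abs_nonneg b), mul_zero]
  gcongr
  linarith

@[fun_prop]
lemma measurable_sat (r : ℝ) : Measurable (sat r) :=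
  Measurable.ite (measurableSet_le measurable_abs measurable_const) measurable_id
    ((measurable_id.const_mul r).div measurable_abs)

lemma cosh_sub_eq_exp_mul_cosh_add_exp_mul_sinh (u d : ℝ) :
    cosh (u - d) = exp (-d) * cosh u + exp (-u) * sinh d := by
  simp only [cosh_eq, sinh_eq, sub_eq_add_neg, neg_add, neg_neg, exp_add, exp_neg]
  field_simp
  ring

lemma cosh_le_exp_neg_mul_cosh_add_exp {x y d : ℝ} (hd : 0 ≤ d) (h : |y| ≤ max (|x| - d) 0) :
    cosh y ≤ exp (-d) * cosh x + exp d := by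
  have hcx : 0 ≤ exp (-d) * cosh x := by positivity
  rcases le_or_gt |x| d with hxd | hxd
  · have hy : y = 0 := abs_nonpos_iff.mp (by rwa [max_eq_right (by linarith)] at h)
    rw [hy, cosh_zero]
    linarith [one_le_exp hd]
  · have hy : cosh y ≤ cosh (|x| - d) := by
      rwa [cosh_le_cosh, abs_of_pos (sub_pos.2 hxd), ← max_eq_left (sub_pos.2 hxd).le]
    have hsinh : exp (-|x|) * sinh d ≤ exp d :=
      calc exp (-|x|) * sinh d ≤ 1 * sinh d := by
            gcongr
            simp
        _ ≤ exp d := by rw [one_mul, sinh_eq]; linarith [exp_pos (-d), exp_pos d]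
    rw [cosh_sub_eq_exp_mul_cosh_add_exp_mul_sinh, cosh_abs] at hy
    linarith

lemma cosh_mul_le_of_abs_le {F : ℝ → ℝ} {l δ : ℝ} (hl : 0 ≤ l) (hδ : 0 ≤ δ)
    (hFδ : ∀ x, |F x| ≤ max (|x| - δ) 0) (x : ℝ) :
    cosh (l * F x) ≤ exp (-(l * δ)) * cosh (l * x) + exp (l * δ) := by
  refine cosh_le_exp_neg_mul_cosh_add_exp (mul_nonneg hl hδ) ?_
  rw [abs_mul, abs_mul, abs_of_nonneg hl, ← mul_sub, ← mul_zero l, ← mul_max_of_nonneg _ _ hl]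
  exact mul_le_mul_of_nonneg_left (hFδ x) hl

lemma one_add_sq_div_two_le_cosh (x : ℝ) : 1 + x ^ 2 / 2 ≤ cosh x := by
  have h := (x.hasSum_cosh.summable).sum_le_tsum (Finset.range 2)
    (fun i _ => by rw [pow_mul]; positivity)
  rw [← cosh_eq_tsum] at h
  simpa [Finset.sum_range_succ, Nat.factorial] using h

lemma le_max_div_one_sub_of_le_mul_add {u : ℕ → ℝ} {ρ k : ℝ} (hρ₀ : 0 ≤ ρ) (hρ₁ : ρ < 1)
    (h : ∀ t, u (t + 1) ≤ ρ * u t + k) (t : ℕ) : u t ≤ max (u 0) (k / (1 - ρ)) := by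
  set M := max (u 0) (k / (1 - ρ))
  have hk : k ≤ (1 - ρ) * M := by
    rw [← div_le_iff₀' (by linarith)]
    exact le_max_right _ _
  induction t with
  | zero => exact le_max_left _ _
  | succ t ih =>
    calc u (t + 1) ≤ ρ * u t + k := h t
      _ ≤ ρ * M + (1 - ρ) * M := by gcongr
      _ = M := by ring

lemma isProbabilityMeasure_uniformLaw {C : ℝ} (hC : 0 < C) :
    IsProbabilityMeasure (uniformLaw C) := by
  constructor
  rw [uniformLaw, Measure.smul_apply, smul_eq_mul, Measure.restrict_apply MeasurableSet.univ,
    Set.univ_inter, Real.volume_Icc, show C - -C = 2 * C by ring]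
  exact ENNReal.inv_mul_cancel (by simpa using hC) ENNReal.ofReal_ne_top

lemma integral_id_uniformLaw {C : ℝ} (hC : 0 ≤ C) : ∫ x, x ∂(uniformLaw C) = 0 := by
  rw [uniformLaw, integral_smul_measure, integral_Icc_eq_integral_Ioc,
    ← intervalIntegral.integral_of_le (by linarith), integral_id]
  simp

lemma hasSubgaussianMGF_id_uniformLaw {C : ℝ} (hC : 0 < C) :
    HasSubgaussianMGF id (C.toNNReal ^ 2) (uniformLaw C) := by
  have := isProbabilityMeasure_uniformLaw hC
  have hmem : ∀ᵐ x ∂(uniformLaw C), x ∈ Set.Icc (-C) C :=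
    Measure.ae_smul_measure (ae_restrict_mem measurableSet_Icc) _
  have hc : ‖C - -C‖₊ / 2 = C.toNNReal := by
    ext
    simp only [NNReal.coe_div, coe_nnnorm, Real.norm_eq_abs, sub_neg_eq_add, NNReal.coe_ofNat,
      Real.coe_toNNReal _ hC.le]
    rw [abs_of_pos (by linarith)]
    ring
  rw [← hc]
  exact hasSubgaussianMGF_of_mem_Icc_of_integral_eq_zero measurable_id.aemeasurable hmem
    (integral_id_uniformLaw hC.le)

lemma hasSubgaussianMGF_of_map_eq_gaussianReal {Ω : Type*} [MeasurableSpace Ω] {μ : Measure Ω}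
    {W : Ω → ℝ} {v : ℝ≥0} (hW : AEMeasurable W μ) (h : μ.map W = gaussianReal 0 v) :
    HasSubgaussianMGF W v μ := by
  rw [← HasSubgaussianMGF.id_map_iff hW, h]
  exact ⟨fun t => integrable_exp_mul_gaussianReal t, fun t => by simp [mgf_id_gaussianReal]⟩

namespace ProbabilityTheory

variable {Ω ι β : Type*} [mβ : MeasurableSpace β] {Z : ι → Ω → β} {τ : ι → ℕ}
  {X N : ℕ → Ω → ℝ} {F : ℝ → ℝ} {x₀ : ℝ}

lemma measurable_biSup_comap {S : Set ι} {i : ι} (hi : i ∈ S) :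
    Measurable[⨆ j ∈ S, mβ.comap (Z j)] (Z i) :=
  (comap_measurable _).mono (le_biSup (fun j => mβ.comap (Z j)) hi) le_rfl

lemma measurable_biSup_comap_of_rec (hF : Measurable F)
    (hN : ∀ t, Measurable[⨆ i ∈ τ ⁻¹' {t}, mβ.comap (Z i)] (N t)) (hX0 : ∀ ω, X 0 ω = x₀)
    (hrec : ∀ t ω, X (t + 1) ω = F (X t ω) + N t ω) (t : ℕ) :
    Measurable[⨆ i ∈ {i | τ i < t}, mβ.comap (Z i)] (X t) := by
  induction t with
  | zero =>
    rw [show X 0 = fun _ => x₀ from funext hX0]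
    exact measurable_const
  | succ t ih =>
    rw [show X (t + 1) = fun ω => F (X t ω) + N t ω from funext (hrec t)]
    refine (hF.comp (ih.mono ?_ le_rfl)).add ((hN t).mono ?_ le_rfl)
    · exact biSup_mono fun i (hi : τ i < t) => hi.trans (Nat.lt_succ_self t)
    · exact biSup_mono fun i (hi : τ i = t) => (Nat.lt_succ_iff).2 hi.le

variable [MeasurableSpace Ω] {μ : Measure Ω}

lemma iIndepFun.indepFun_of_measurable_biSup {γ γ' : Type*} [MeasurableSpace γ]
    [MeasurableSpace γ'] (h : iIndepFun Z μ) (hZ : ∀ i, Measurable (Z i)) {S T : Set ι}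
    (hST : Disjoint S T) {X : Ω → γ} {Y : Ω → γ'}
    (hX : Measurable[⨆ i ∈ S, mβ.comap (Z i)] X) (hY : Measurable[⨆ i ∈ T, mβ.comap (Z i)] Y) :
    X ⟂ᵢ[μ] Y := by
  rw [IndepFun_iff_Indep]
  exact indep_of_indep_of_le (indep_iSup_of_disjoint (fun i => (hZ i).comap_le) h.iIndep hST)
    hX.comap_le hY.comap_le

lemma iIndepFun.indepFun_of_rec (h : iIndepFun Z μ) (hZ : ∀ i, Measurable (Z i))
    (hF : Measurable F) (hN : ∀ t, Measurable[⨆ i ∈ τ ⁻¹' {t}, mβ.comap (Z i)] (N t))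
    (hX0 : ∀ ω, X 0 ω = x₀) (hrec : ∀ t ω, X (t + 1) ω = F (X t ω) + N t ω) (t : ℕ) :
    X t ⟂ᵢ[μ] N t :=
  h.indepFun_of_measurable_biSup hZ
    (Set.disjoint_left.2 fun i (hi : τ i < t) (hi' : τ i = t) => hi.ne hi')
    (measurable_biSup_comap_of_rec hF hN hX0 hrec t) (hN t)

end ProbabilityTheory

section CoshMoment

variable {Ω : Type*} [MeasurableSpace Ω] {μ : Measure Ω} {l : ℝ}

lemma integrable_exp_mul_of_integrable_cosh {Y : Ω → ℝ} (hY : AEMeasurable Y μ)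
    (h : Integrable (fun ω => cosh (l * Y ω)) μ) : Integrable (fun ω => exp (l * Y ω)) μ := by
  refine (h.const_mul 2).mono' (by fun_prop) (ae_of_all _ fun ω => ?_)
  rw [norm_of_nonneg (exp_pos _).le, cosh_eq]
  linarith [exp_pos (-(l * Y ω))]

lemma integral_cosh_mul_eq {Z : Ω → ℝ} (h₁ : Integrable (fun ω => exp (l * Z ω)) μ)
    (h₂ : Integrable (fun ω => exp (-l * Z ω)) μ) :
    ∫ ω, cosh (l * Z ω) ∂μ = (mgf Z μ l + mgf Z μ (-l)) / 2 := by
  simp_rw [cosh_eq, ← neg_mul]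
  rw [integral_div, integral_add h₁ h₂, mgf, mgf]

lemma integral_cosh_mul_add_le {Y N : Ω → ℝ} {c : ℝ≥0} (hY : AEMeasurable Y μ)
    (hcosh : Integrable (fun ω => cosh (l * Y ω)) μ) (hN : HasSubgaussianMGF N c μ)
    (hind : Y ⟂ᵢ[μ] N) :
    Integrable (fun ω => cosh (l * (Y ω + N ω))) μ ∧
      ∫ ω, cosh (l * (Y ω + N ω)) ∂μ ≤ exp (c * l ^ 2 / 2) * ∫ ω, cosh (l * Y ω) ∂μ := by
  have hexp : ∀ s, s = l ∨ s = -l → Integrable (fun ω => exp (s * Y ω)) μ := by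
    rintro s (rfl | rfl)
    · exact integrable_exp_mul_of_integrable_cosh hY hcosh
    · exact integrable_exp_mul_of_integrable_cosh hY
        (by simpa only [neg_mul, cosh_neg] using hcosh)
  have hsum : ∀ s, s = l ∨ s = -l → Integrable (fun ω => exp (s * (Y ω + N ω))) μ :=
    fun s hs => hind.integrable_exp_mul_add (hexp s hs) (hN.integrable_exp_mul s)
  have hmgf : ∀ s, s = l ∨ s = -l → mgf (Y + N) μ s ≤ mgf Y μ s * exp (c * l ^ 2 / 2) := by
    intro s hs
    rw [hind.mgf_add (hexp s hs).aestronglyMeasurable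
      (hN.integrable_exp_mul s).aestronglyMeasurable]
    have hsq : s ^ 2 = l ^ 2 := by rcases hs with rfl | rfl <;> ring
    rw [← hsq]
    exact mul_le_mul_of_nonneg_left (hN.mgf_le s) mgf_nonneg
  refine ⟨?_, ?_⟩
  · simp_rw [cosh_eq, ← neg_mul]
    exact ((hsum l (.inl rfl)).add (hsum (-l) (.inr rfl))).div_const 2
  · rw [show (fun ω => cosh (l * (Y ω + N ω))) = fun ω => cosh (l * (Y + N) ω) from rfl,
      integral_cosh_mul_eq (Z := Y + N) (hsum l (.inl rfl)) (hsum (-l) (.inr rfl)),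
      integral_cosh_mul_eq (hexp l (.inl rfl)) (hexp (-l) (.inr rfl))]
    linarith [hmgf l (.inl rfl), hmgf (-l) (.inr rfl)]

lemma lintegral_ofReal_sq_le_of_integral_cosh_le {Y : Ω → ℝ} {B : ℝ} (hl : l ≠ 0)
    (hint : Integrable (fun ω => cosh (l * Y ω)) μ) (hB : ∫ ω, cosh (l * Y ω) ∂μ ≤ B) :
    ∫⁻ ω, ENNReal.ofReal (Y ω ^ 2) ∂μ ≤ ENNReal.ofReal (2 / l ^ 2 * B) := by
  have hl2 : 0 < l ^ 2 := by positivity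
  have hpt : ∀ ω, Y ω ^ 2 ≤ 2 / l ^ 2 * cosh (l * Y ω) := fun ω => by
    rw [div_mul_eq_mul_div, le_div_iff₀ hl2]
    nlinarith [one_add_sq_div_two_le_cosh (l * Y ω)]
  calc ∫⁻ ω, ENNReal.ofReal (Y ω ^ 2) ∂μ
      ≤ ∫⁻ ω, ENNReal.ofReal (2 / l ^ 2 * cosh (l * Y ω)) ∂μ :=
        lintegral_mono fun ω => ENNReal.ofReal_le_ofReal (hpt ω)
    _ = ENNReal.ofReal (∫ ω, 2 / l ^ 2 * cosh (l * Y ω) ∂μ) :=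
        (ofReal_integral_eq_lintegral_ofReal (hint.const_mul _)
          (ae_of_all _ fun ω => by positivity)).symm
    _ ≤ ENNReal.ofReal (2 / l ^ 2 * B) := by
        rw [integral_const_mul]
        gcongr

variable [IsProbabilityMeasure μ]

theorem exists_forall_integral_cosh_le {X N : ℕ → Ω → ℝ} {F : ℝ → ℝ} {c : ℝ≥0} {δ x₀ : ℝ}
    (hδ : 0 < δ) (hF : Measurable F)
    (hFδ : ∀ x, |F x| ≤ max (|x| - δ) 0) (hX : ∀ t, AEMeasurable (X t) μ)
    (hN : ∀ t, HasSubgaussianMGF (N t) c μ) (hind : ∀ t, X t ⟂ᵢ[μ] N t)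
    (hX0 : ∀ ω, X 0 ω = x₀) (hrec : ∀ t ω, X (t + 1) ω = F (X t ω) + N t ω) :
    ∃ l > 0, ∃ B > 0, ∀ t,
      Integrable (fun ω => cosh (l * X t ω)) μ ∧ ∫ ω, cosh (l * X t ω) ∂μ ≤ B := by
  set l := δ / (c + 1)
  have hl : 0 < l := by positivity
  have hlδ : c * l < 2 * δ := by
    rw [mul_div_assoc', div_lt_iff₀ (by positivity)]
    nlinarith [c.2]
  have hcontr := cosh_mul_le_of_abs_le hl.le hδ.le hFδ
  have hFX : ∀ t, Integrable (fun ω => cosh (l * X t ω)) μ →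
      Integrable (fun ω => cosh (l * F (X t ω))) μ := fun t h =>
    ((h.const_mul _).add (integrable_const _)).mono'
      ((continuous_cosh.comp_aestronglyMeasurable
        ((hF.comp_aemeasurable (hX t)).const_mul l).aestronglyMeasurable))
      (ae_of_all _ fun ω => by rw [norm_of_nonneg (cosh_pos _).le]; exact hcontr _)
  have hstep : ∀ t, Integrable (fun ω => cosh (l * X t ω)) μ →
      Integrable (fun ω => cosh (l * X (t + 1) ω)) μ ∧
        ∫ ω, cosh (l * X (t + 1) ω) ∂μ ≤ exp (c * l ^ 2 / 2) * ∫ ω, cosh (l * F (X t ω)) ∂μ :=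
    fun t h => by
      simp_rw [hrec t]
      exact integral_cosh_mul_add_le (hF.comp_aemeasurable (hX t)) (hFX t h) (hN t)
        ((hind t).comp hF measurable_id)
  have hint : ∀ t, Integrable (fun ω => cosh (l * X t ω)) μ := by
    intro t
    induction t with
    | zero => simp_rw [hX0]; exact integrable_const _
    | succ t ih => exact (hstep t ih).1
  set M := exp (c * l ^ 2 / 2)
  have hρ : M * exp (-(l * δ)) < 1 := by
    rw [← exp_add, exp_lt_one_iff]
    nlinarith
  refine ⟨l, hl, max (cosh (l * x₀)) (M * exp (l * δ) / (1 - M * exp (-(l * δ)))),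
    lt_max_of_lt_left (cosh_pos _), fun t => ⟨hint t, ?_⟩⟩
  have hdrift : ∀ t, ∫ ω, cosh (l * X (t + 1) ω) ∂μ
      ≤ M * exp (-(l * δ)) * ∫ ω, cosh (l * X t ω) ∂μ + M * exp (l * δ) := fun t =>
    calc ∫ ω, cosh (l * X (t + 1) ω) ∂μ
        ≤ M * ∫ ω, cosh (l * F (X t ω)) ∂μ := (hstep t (hint t)).2
      _ ≤ M * ∫ ω, (exp (-(l * δ)) * cosh (l * X t ω) + exp (l * δ)) ∂μ := by
          refine mul_le_mul_of_nonneg_left ?_ (exp_pos _).le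
          exact integral_mono (hFX t (hint t)) ((hint t).const_mul _ |>.add (integrable_const _))
            fun ω => hcontr _
      _ = _ := by
          rw [integral_add ((hint t).const_mul _) (integrable_const _), integral_const_mul,
            integral_const, probReal_univ, one_smul]
          ring
  simpa only [hX0, integral_const, probReal_univ, one_smul] using
    le_max_div_one_sub_of_le_mul_add (u := fun t => ∫ ω, cosh (l * X t ω) ∂μ) (by positivity)
      hρ hdrift t

end CoshMoment

theorem reference_system_msb_general {Ω : Type*} [MeasurableSpace Ω] (P : Measure Ω)
    [IsProbabilityMeasure P]
    (a b σW Umax C x0 : ℝ) (ha : |a| ≤ 1) (hb : b ≠ 0)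
    (hCpos : 0 < C) (hCU : C < Umax)
    (W V Xs : ℕ → Ω → ℝ)
    (measW : ∀ t, Measurable (W t)) (measV : ∀ t, Measurable (V t))
    (measXs : ∀ t, Measurable (Xs t))
    (hWlaw : ∀ t, P.map (W t) = gaussianReal 0 ⟨σW ^ 2, sq_nonneg σW⟩)
    (hVlaw : ∀ t, P.map (V t) = uniformLaw C)
    (hIndep : iIndepFun
      (Sum.elim W V) P)
    (hXs0 : ∀ ω, Xs 0 ω = x0)
    (hXsrec : ∀ t ω, Xs (t + 1) ω =
      a * Xs t ω + b * (sat (Umax - C) (-(a / b) * Xs t ω) + V t ω) + W t ω) :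
    ∃ e : ℝ, 0 < e ∧ ∀ t : ℕ,
      ∫⁻ ω, ENNReal.ofReal (Xs t ω ^ 2) ∂P ≤ ENNReal.ofReal e := by
  set F : ℝ → ℝ := fun x => a * x + b * sat (Umax - C) (-(a / b) * x)
  set N : ℕ → Ω → ℝ := fun t ω => b * V t ω + W t ω
  set τ : ℕ ⊕ ℕ → ℕ := Sum.elim id id
  have hrec : ∀ t ω, Xs (t + 1) ω = F (Xs t ω) + N t ω := fun t ω => by rw [hXsrec]; ring
  have hZ : ∀ i, Measurable (Sum.elim W V i) := fun i => i.rec measW measV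
  have hτ : ∀ t, Sum.inl t ∈ τ ⁻¹' {t} ∧ Sum.inr t ∈ τ ⁻¹' {t} := fun t => ⟨rfl, rfl⟩
  have hind : ∀ t, Xs t ⟂ᵢ[P] N t :=
    hIndep.indepFun_of_rec hZ (by fun_prop)
      (fun t => ((measurable_biSup_comap (hτ t).2).const_mul b).add
        (measurable_biSup_comap (hτ t).1)) hXs0 hrec
  have hN : ∀ t, HasSubgaussianMGF (N t) _ P := fun t =>
    (((HasSubgaussianMGF.id_map_iff (measV t).aemeasurable).1
      (hVlaw t ▸ hasSubgaussianMGF_id_uniformLaw hCpos)).const_mul b).add_of_indepFun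
      (hasSubgaussianMGF_of_map_eq_gaussianReal (measW t).aemeasurable (hWlaw t))
      ((hIndep.indepFun Sum.inr_ne_inl).comp (measurable_const_mul b) measurable_id)
  obtain ⟨l, hl, B, hB, hXB⟩ := exists_forall_integral_cosh_le
    (mul_pos (sub_pos.2 hCU) (abs_pos.2 hb)) (by fun_prop)
    (abs_mul_add_mul_sat_le ha hb (sub_pos.2 hCU).le) (fun t => (measXs t).aemeasurable) hN hind
    hXs0 hrec
  exact ⟨2 / l ^ 2 * B, by positivity,
    fun t => lintegral_ofReal_sq_le_of_integral_cosh_le hl.ne' (hXB t).1 (hXB t).2⟩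

/-- **Lemma 8: mean square boundedness of the reference system when `a ∈ {-1, 1}`.** -/
theorem reference_system_msb {Ω : Type*} [MeasurableSpace Ω] (P : Measure Ω)
    [IsProbabilityMeasure P]
    (a b σW Umax C x0 : ℝ) (ha : |a| ≤ 1) (ha1 : a = -1 ∨ a = 1) (hb : b ≠ 0)
    (hσW : 0 < σW) (hCpos : 0 < C) (hCU : C < Umax)
    (W V Xs : ℕ → Ω → ℝ)
    (measW : ∀ t, Measurable (W t)) (measV : ∀ t, Measurable (V t))
    (measXs : ∀ t, Measurable (Xs t))
    (hWlaw : ∀ t, P.map (W t) = gaussianReal 0 ⟨σW ^ 2, sq_nonneg σW⟩)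
    (hVlaw : ∀ t, P.map (V t) = uniformLaw C)
    (hIndep : iIndepFun
      (Sum.elim W V) P)
    (hXs0 : ∀ ω, Xs 0 ω = x0)
    (hXsrec : ∀ t ω, Xs (t + 1) ω =
      a * Xs t ω + b * (sat (Umax - C) (-(a / b) * Xs t ω) + V t ω) + W t ω) :
    ∃ e : ℝ, 0 < e ∧ ∀ t : ℕ,
      ∫⁻ ω, ENNReal.ofReal (Xs t ω ^ 2) ∂P ≤ ENNReal.ofReal e :=
  reference_system_msb_general P a b σW Umax C x0 ha hb hCpos hCU W V Xs measW measV measXs hWlaw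
    hVlaw hIndep hXs0 hXsrec
end
end

section
/- Under assumptions A1–A2 with x₀ ∈ ℝ and a ∈ {−1,1}, let (X_t)_{t∈ℕ₀} be the closed-loop states under the AICMSS control strategy and (X*_t)_{t∈ℕ₀} the reference system states (driven by the same noise sequences (V_t), (W_t)). Then for all d ∈ (0, min(1, |b|)), all k ∈ ℕ, and all t ∈ ℕ₀, on the event {T_d = k} it holds that |X_t − X*_t| ≤ max( (k+1)·2|b|D, 2·((|b|+d)/(1−d) + 3|b|)·D ). -/
open MeasureTheory ProbabilityTheory Real
open scoped ENNReal NNReal RealInnerProductSpace Matrix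

noncomputable section

/-- `T_d`: the first time after which the parameter estimate remains within distance `d`
of the true parameter. -/
def AICMSS.Td {Ω : Type*} [MeasurableSpace Ω] {P : MeasureTheory.Measure Ω}
    (S : AICMSS Ω P) (d : ℝ) (ω : Ω) : ℕ :=
  sInf {t : ℕ | 1 ≤ t ∧ ∀ i : ℕ, t ≤ i → ‖S.θhat i ω - S.θstar‖ ≤ d}

/-!
Since `a = ±1` and `b * σ_D(z) = -a * σ_{|b|D}(-a b z)`, the deviation `e_t = X_t - X*_t` obeys
`|e_{t+1}| = |e_t - (σ_M(κ_t X_t) - σ_M(X*_t))|` with `M = |b| D` and gain `κ_t = -a b G_t`.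
Each step adds at most `2M`, so `|e_t| ≤ 2 M t`; this is used up to time `T_d + 1`. Afterwards the
estimates are `d`-accurate, so `κ_t ≥ (1 - d)|b| / (|b| + d) > 0`. With `R = (|b| + d) D / (1 - d)`,
whenever `|e_t| ≥ 2R` one of `κ_t X_t`, `X*_t` is saturated in the direction of `e_t`, so the
correction `σ_M(κ_t X_t) - σ_M(X*_t)` has the sign of `e_t` and size at most `2M ≤ 2|e_t|`, and
cannot increase `|e_t|`; when `|e_t| < 2R`, the next deviation is below `2R + 2M`.
-/

lemma sat_neg (r x : ℝ) : sat r (-x) = -sat r x := by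
  unfold sat
  rw [abs_neg]
  split_ifs <;> ring

lemma sat_of_le {r x : ℝ} (hr : 0 ≤ r) (h : r ≤ x) : sat r x = r := by
  unfold sat
  split_ifs with hx
  · exact le_antisymm (abs_le.mp hx).2 h
  · have hx0 : 0 < x := lt_of_le_of_ne (hr.trans h) (by rintro rfl; simp_all)
    rw [abs_of_pos hx0, mul_div_cancel_right₀ _ hx0.ne']

lemma sat_of_le_neg {r x : ℝ} (hr : 0 ≤ r) (h : x ≤ -r) : sat r x = -r := by
  rw [← neg_neg x, sat_neg, sat_of_le hr (le_neg.mpr h)]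

lemma sat_mul {c : ℝ} (hc : c ≠ 0) (r x : ℝ) : sat (|c| * r) (c * x) = c * sat r x := by
  have hc' : |c| ≠ 0 := abs_ne_zero.mpr hc
  unfold sat
  simp only [abs_mul, mul_le_mul_iff_right₀ (abs_pos.mpr hc)]
  split_ifs
  · rfl
  · rw [show |c| * r * (c * x) = |c| * (c * (r * x)) by ring, mul_div_mul_left _ _ hc',
      mul_div_assoc]

lemma mul_sat_eq {a b : ℝ} (ha : |a| = 1) (hb : b ≠ 0) (D z : ℝ) :
    b * sat D z = -a * sat (|b| * D) (-(a * b) * z) := by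
  have hab : |-(a * b)| = |b| := by rw [abs_neg, abs_mul, ha, one_mul]
  have ha2 : a * a = 1 := by rw [← abs_mul_abs_self, ha, one_mul]
  rw [← hab, sat_mul (neg_ne_zero.mpr (mul_ne_zero (by rintro rfl; simp at ha) hb))]
  linear_combination (-(b * sat D z)) * ha2

lemma sat_le_sat_of_two_mul_le_sub {M R κ X Y : ℝ} (hM : 0 ≤ M) (hMR : M ≤ R)
    (hκR : M ≤ κ * R) (hκ : 0 < κ) (h : 2 * R ≤ X - Y) : sat M Y ≤ sat M (κ * X) := by
  rcases le_or_gt R X with hX | hX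
  · rw [sat_of_le hM (hκR.trans (mul_le_mul_of_nonneg_left hX hκ.le))]
    exact (le_abs_self _).trans (abs_sat_le hM Y)
  · rw [sat_of_le_neg hM (by linarith)]
    exact neg_le_of_abs_le (abs_sat_le hM _)

lemma mul_sub_sat_sub_sat_nonneg {M R κ X Y : ℝ} (hM : 0 ≤ M) (hMR : M ≤ R)
    (hκR : M ≤ κ * R) (hκ : 0 < κ) (h : 2 * R ≤ |X - Y|) :
    0 ≤ (X - Y) * (sat M (κ * X) - sat M Y) := by
  rcases le_abs'.mp h with h | h
  · have := sat_le_sat_of_two_mul_le_sub (X := -X) (Y := -Y) hM hMR hκR hκ (by linarith)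
    rw [mul_neg, sat_neg, sat_neg] at this
    exact mul_nonneg_of_nonpos_of_nonpos (by linarith) (by linarith)
  · exact mul_nonneg (by linarith) (sub_nonneg.mpr (sat_le_sat_of_two_mul_le_sub hM hMR hκR hκ h))

lemma abs_sub_le_of_mul_nonneg {z u : ℝ} (h : 0 ≤ z * u) (hu : |u| ≤ 2 * |z|) :
    |z - u| ≤ |z| := by
  rw [← sq_le_sq₀ (abs_nonneg _) (abs_nonneg _), sq_abs, sq_abs]
  nlinarith [abs_mul_abs_self u, abs_mul z u, abs_of_nonneg h, abs_nonneg u]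

lemma abs_sub_sat_sub_sat_le_add {M : ℝ} (hM : 0 ≤ M) (z p q : ℝ) :
    |z - (sat M p - sat M q)| ≤ |z| + 2 * M := by
  have := abs_sub (sat M p) (sat M q)
  linarith [abs_sub z (sat M p - sat M q), abs_sat_le hM p, abs_sat_le hM q]

lemma abs_sub_sat_sub_sat_le_max {M R κ X Y : ℝ} (hM : 0 ≤ M) (hMR : M ≤ R)
    (hκR : M ≤ κ * R) (hκ : 0 < κ) :
    |(X - Y) - (sat M (κ * X) - sat M Y)| ≤ max |X - Y| (2 * R + 2 * M) := by
  rcases lt_or_ge |X - Y| (2 * R) with h | h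
  · exact le_max_of_le_right (by linarith [abs_sub_sat_sub_sat_le_add hM (X - Y) (κ * X) Y])
  · refine le_max_of_le_left (abs_sub_le_of_mul_nonneg
      (mul_sub_sat_sub_sat_nonneg hM hMR hκR hκ h) ?_)
    linarith [abs_sub (sat M (κ * X)) (sat M Y), abs_sat_le hM (κ * X), abs_sat_le hM Y]

lemma le_mul_mul_div_of_abs_sub_le {a b a' b' d : ℝ} (ha : |a| = 1) (hd1 : d < 1)
    (hdb : d < |b|) (ha' : |a' - a| ≤ d) (hb' : |b' - b| ≤ d) :
    (1 - d) * (|b| / (|b| + d)) ≤ a * a' * (b / b') := by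
  have ha2 : a * a = 1 := by rw [← abs_mul_abs_self, ha, one_mul]
  have hd0 : 0 ≤ d := (abs_nonneg _).trans ha'
  have haa' : 1 - d ≤ a * a' := by
    have := neg_abs_le (a * (a' - a))
    rw [abs_mul, ha, one_mul] at this
    nlinarith
  have hbb' : 0 < b * b' := by
    have := neg_abs_le (b * (b' - b))
    rw [abs_mul] at this
    nlinarith [abs_mul_abs_self b, mul_le_mul_of_nonneg_left hb' (abs_nonneg b)]
  have hb'b : |b'| ≤ |b| + d := by linarith [abs_sub_abs_le_abs_sub b' b]
  have hb'0 : b' ≠ 0 := by rintro rfl; simp at hbb'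
  have hbb : |b| / (|b| + d) ≤ b / b' :=
    calc |b| / (|b| + d) ≤ |b| / |b'| :=
          div_le_div_of_nonneg_left (abs_nonneg b) (abs_pos.mpr hb'0) hb'b
      _ = b / b' := by rw [← abs_div, abs_of_pos (div_pos_iff.mpr (mul_pos_iff.mp hbb'))]
  exact mul_le_mul haa' hbb (by positivity) (by linarith)

lemma abs_closed_loop_sub_reference {a b : ℝ} (ha : |a| = 1) (hb : b ≠ 0) (D g x y v w : ℝ) :
    |a * x + b * (sat D (g * x) + v) + w - (a * y + b * (sat D (-(a / b) * y) + v) + w)| =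
      |x - y - (sat (|b| * D) (-(a * b * g) * x) - sat (|b| * D) y)| := by
  have ha2 : a * a = 1 := by rw [← abs_mul_abs_self, ha, one_mul]
  have hx := mul_sat_eq ha hb D (g * x)
  have hy := mul_sat_eq ha hb D (-(a / b) * y)
  rw [show -(a * b) * (-(a / b) * y) = y by field_simp; linear_combination y * ha2] at hy
  rw [show -(a * b) * (g * x) = -(a * b * g) * x by ring] at hx
  have hdiff : a * x + b * (sat D (g * x) + v) + w - (a * y + b * (sat D (-(a / b) * y) + v) + w) =
      a * (x - y - (sat (|b| * D) (-(a * b * g) * x) - sat (|b| * D) y)) := by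
    linear_combination hx - hy
  rw [hdiff, abs_mul, ha, one_mul]

lemma abs_sub_sat_sub_sat_le_max_of_abs_sub_le {a b a' b' d D X Y : ℝ} (ha : |a| = 1)
    (hD : 0 ≤ D) (hd1 : d < 1) (hdb : d < |b|) (ha' : |a' - a| ≤ d) (hb' : |b' - b| ≤ d) :
    |X - Y - (sat (|b| * D) (-(a * b * -(a' / b')) * X) - sat (|b| * D) Y)| ≤
      max |X - Y| (2 * ((|b| + d) / (1 - d) + 3 * |b|) * D) := by
  have hd0 : 0 ≤ d := (abs_nonneg _).trans ha'
  have hκ := le_mul_mul_div_of_abs_sub_le ha hd1 hdb ha' hb'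
  rw [show -(a * b * -(a' / b')) = a * a' * (b / b') by ring]
  have hb : 0 < |b| := hd0.trans_lt hdb
  have hR : |b| ≤ (|b| + d) / (1 - d) := by
    rw [le_div_iff₀ (by linarith)]; nlinarith
  have hMR : |b| * D ≤ (|b| + d) / (1 - d) * D := mul_le_mul_of_nonneg_right hR hD
  have hd1' : 1 - d ≠ 0 := (sub_pos.mpr hd1).ne'
  have hκR : |b| * D ≤ a * a' * (b / b') * ((|b| + d) / (1 - d) * D) := by
    calc |b| * D = (1 - d) * (|b| / (|b| + d)) * ((|b| + d) / (1 - d) * D) := by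
          field_simp
      _ ≤ _ := mul_le_mul_of_nonneg_right hκ (by positivity)
  refine (abs_sub_sat_sub_sat_le_max (by positivity) hMR hκR
    (lt_of_lt_of_le (by positivity) hκ)).trans (max_le_max le_rfl ?_)
  nlinarith [mul_nonneg hb.le hD]

lemma le_max_of_add_le_of_le_max {u : ℕ → ℝ} {c B : ℝ} {n : ℕ} (hc : 0 ≤ c) (h0 : u 0 ≤ 0)
    (hgrow : ∀ t, u (t + 1) ≤ u t + c) (hlate : ∀ t, n ≤ t → u (t + 1) ≤ max (u t) B)
    (t : ℕ) : u t ≤ max (n * c) B := by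
  have hlin : ∀ t : ℕ, u t ≤ t * c := by
    intro t
    induction t with
    | zero => simpa using h0
    | succ t ih => push_cast; linarith [hgrow t]
  rcases le_total t n with ht | ht
  · exact le_max_of_le_left ((hlin t).trans (mul_le_mul_of_nonneg_right (by exact_mod_cast ht) hc))
  · induction t, ht using Nat.le_induction with
    | base => exact le_max_of_le_left (hlin n)
    | succ t ht ih => exact (hlate t ht).trans (max_le ih (le_max_right _ _))

namespace AICMSS

variable {Ω : Type*} [MeasurableSpace Ω] {P : Measure Ω}

lemma norm_θhat_sub_θstar_le_of_Td_eq {S : AICMSS Ω P} {d : ℝ} {k i : ℕ} {ω : Ω} (hk : 1 ≤ k)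
    (hT : S.Td d ω = k) (hi : k ≤ i) : ‖S.θhat i ω - S.θstar‖ ≤ d := by
  have hne : {t : ℕ | 1 ≤ t ∧ ∀ i : ℕ, t ≤ i → ‖S.θhat i ω - S.θstar‖ ≤ d}.Nonempty := by
    by_contra h
    rw [Set.not_nonempty_iff_eq_empty] at h
    simp only [Td, h, Nat.sInf_empty] at hT
    omega
  have hmem : S.Td d ω ∈ {t : ℕ | 1 ≤ t ∧ ∀ i : ℕ, t ≤ i → ‖S.θhat i ω - S.θstar‖ ≤ d} :=
    Nat.sInf_mem hne
  exact (hT ▸ hmem).2 i hi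

lemma abs_θhat_sub_le_of_Td_eq {S : AICMSS Ω P} {d : ℝ} {k i : ℕ} {ω : Ω} (hk : 1 ≤ k)
    (hT : S.Td d ω = k) (hi : k ≤ i) :
    |WithLp.equiv 2 (Fin 2 → ℝ) (S.θhat i ω) 0 - S.a| ≤ d ∧
      |WithLp.equiv 2 (Fin 2 → ℝ) (S.θhat i ω) 1 - S.b| ≤ d := by
  have h := norm_θhat_sub_θstar_le_of_Td_eq hk hT hi
  have h0 := (PiLp.norm_apply_le (S.θhat i ω - S.θstar) 0).trans h
  have h1 := (PiLp.norm_apply_le (S.θhat i ω - S.θstar) 1).trans h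
  simp only [Real.norm_eq_abs, PiLp.sub_apply, θstar] at h0 h1
  exact ⟨by simpa using h0, by simpa using h1⟩

end AICMSS

theorem reference_error_bound_general {Ω : Type*} [MeasurableSpace Ω] (P : Measure Ω)
    (S : AICMSS Ω P) (ha1 : S.a = -1 ∨ S.a = 1)
    (Xs : ℕ → Ω → ℝ) (hXs0 : ∀ ω, Xs 0 ω = S.x0)
    (hXsrec : ∀ t ω, Xs (t + 1) ω =
      S.a * Xs t ω + S.b * (sat S.D (-(S.a / S.b) * Xs t ω) + S.V t ω) + S.W t ω) :
    ∀ d : ℝ, 0 < d → d < min 1 |S.b| → ∀ k : ℕ, 1 ≤ k → ∀ t : ℕ, ∀ ω : Ω,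
      S.Td d ω = k →
        |S.X t ω - Xs t ω| ≤ max (((k : ℝ) + 1) * (2 * |S.b| * S.D))
          (2 * ((|S.b| + d) / (1 - d) + 3 * |S.b|) * S.D) := by
  intro d _ hd k hk t ω hT
  obtain ⟨hd1, hdb⟩ := lt_min_iff.mp hd
  have ha : |S.a| = 1 := by rcases ha1 with h | h <;> simp [h]
  have hD : 0 ≤ S.D := (sub_pos.mpr S.hCU).le
  have herr : ∀ s, |S.X (s + 1) ω - Xs (s + 1) ω| = |S.X s ω - Xs s ω -
      (sat (|S.b| * S.D) (-(S.a * S.b * S.G s ω) * S.X s ω) - sat (|S.b| * S.D) (Xs s ω))| := by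
    intro s
    rw [S.hXrec, S.hU, hXsrec]
    exact abs_closed_loop_sub_reference ha S.hb _ _ _ _ _ _
  have hgrow : ∀ s, |S.X (s + 1) ω - Xs (s + 1) ω| ≤ |S.X s ω - Xs s ω| + 2 * |S.b| * S.D := by
    intro s
    rw [herr]
    exact (abs_sub_sat_sub_sat_le_add (mul_nonneg (abs_nonneg S.b) hD) _ _ _).trans_eq (by ring)
  have hlate : ∀ s, k + 1 ≤ s → |S.X (s + 1) ω - Xs (s + 1) ω| ≤
      max |S.X s ω - Xs s ω| (2 * ((|S.b| + d) / (1 - d) + 3 * |S.b|) * S.D) := by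
    intro s hs
    obtain ⟨ha', hb'⟩ := S.abs_θhat_sub_le_of_Td_eq hk hT (i := s - 1) (by omega)
    rw [herr, S.hG s ω (by omega)]
    exact abs_sub_sat_sub_sat_le_max_of_abs_sub_le ha hD hd1 hdb ha' hb'
  exact_mod_cast le_max_of_add_le_of_le_max (u := fun s => |S.X s ω - Xs s ω|)
    (by positivity) (by simp [S.hX0, hXs0]) hgrow hlate t

/-- **Lemma 11: pathwise bound on the deviation from the reference system after `T_d`.** -/
theorem reference_error_bound {Ω : Type*} [MeasurableSpace Ω] (P : Measure Ω)
    [IsProbabilityMeasure P] (S : AICMSS Ω P) (ha1 : S.a = -1 ∨ S.a = 1)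
    (Xs : ℕ → Ω → ℝ) (hXs0 : ∀ ω, Xs 0 ω = S.x0)
    (hXsrec : ∀ t ω, Xs (t + 1) ω =
      S.a * Xs t ω + S.b * (sat S.D (-(S.a / S.b) * Xs t ω) + S.V t ω) + S.W t ω) :
    ∀ d : ℝ, 0 < d → d < min 1 |S.b| → ∀ k : ℕ, 1 ≤ k → ∀ t : ℕ, ∀ ω : Ω,
      S.Td d ω = k →
        |S.X t ω - Xs t ω| ≤ max (((k : ℝ) + 1) * (2 * |S.b| * S.D))
          (2 * ((|S.b| + d) / (1 - d) + 3 * |S.b|) * S.D) :=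
  reference_error_bound_general P S ha1 Xs hXs0 hXsrec
end
end
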